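/- arXiv:2112.07981 — 6 statements merged into one kernel-verified Lean document; each statement's English description precedes it below -/
import Mathlib

section
/- Let Ω be a set with six binary operations ←, →, ⊲, ⊳, ·, *, let (μ_α)_{α∈Ω} be a family of scalars, and set λ_{α,β} = μ_{α*β}. Let (A, (P_ω)_{ω∈Ω}) be an Ω-Rota-Baxter algebra of weight λ, i.e., A is an associative algebra and each P_ω : A → A is linear with P_α(a)P_β(b) = P_{α→β}(P_{α⊳β}(a)b) + P_{α←β}(aP_{α⊲β}(b)) + λ_{α,β} P_{α·β}(ab) for all a,b ∈ A, α,β ∈ Ω. Define a ≺_ω b := a P_ω(b), a ≻_ω b := P_ω(a) b, a ∘_ω b := μ_ω ab. Then (A, (≺_ω), (≻_ω), (∘_ω)) is an Ω-tridendriform algebra. -/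
/-- The six binary operations of an extended triassociative semigroup. -/
structure ETSops (Ω : Type*) where
  la : Ω → Ω → Ω   -- α ← β
  ra : Ω → Ω → Ω   -- α → β
  tl : Ω → Ω → Ω   -- α ⊲ β
  tr : Ω → Ω → Ω   -- α ⊳ β
  dot : Ω → Ω → Ω  -- α · β
  st : Ω → Ω → Ω   -- α * β

/-- Extended diassociative semigroup axioms. -/
structure IsEDS {Ω : Type*} (S : ETSops Ω) : Prop where
  d1 : ∀ α β γ, S.la (S.la α β) γ = S.la α (S.la β γ)
  d2 : ∀ α β γ, S.la α (S.la β γ) = S.la α (S.ra β γ)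
  d3 : ∀ α β γ, S.la (S.ra α β) γ = S.ra α (S.la β γ)
  d4 : ∀ α β γ, S.ra (S.ra α β) γ = S.ra (S.la α β) γ
  d5 : ∀ α β γ, S.ra (S.la α β) γ = S.ra α (S.ra β γ)
  e1 : ∀ α β γ, S.tr α (S.la β γ) = S.tr α β
  e2 : ∀ α β γ, S.tl (S.ra α β) γ = S.tl β γ
  e3 : ∀ α β γ, S.la (S.tl α β) (S.tl (S.la α β) γ) = S.tl α (S.la β γ)
  e4 : ∀ α β γ, S.tl (S.tl α β) (S.tl (S.la α β) γ) = S.tl β γ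
  e5 : ∀ α β γ, S.ra (S.tl α β) (S.tl (S.la α β) γ) = S.tl α (S.ra β γ)
  e6 : ∀ α β γ, S.tr (S.tl α β) (S.tl (S.la α β) γ) = S.tr β γ
  e7 : ∀ α β γ, S.la (S.tr α (S.ra β γ)) (S.tr β γ) = S.tr (S.la α β) γ
  e8 : ∀ α β γ, S.tl (S.tr α (S.ra β γ)) (S.tr β γ) = S.tl α β
  e9 : ∀ α β γ, S.ra (S.tr α (S.ra β γ)) (S.tr β γ) = S.tr (S.ra α β) γ
  e10 : ∀ α β γ, S.tr (S.tr α (S.ra β γ)) (S.tr β γ) = S.tr α β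

/-- Extended triassociative semigroup axioms. -/
structure IsETS {Ω : Type*} (S : ETSops Ω) extends IsEDS S : Prop where
  t1 : ∀ α β γ, S.st (S.ra α β) γ = S.st β γ
  t2 : ∀ α β γ, S.dot (S.ra α β) γ = S.ra α (S.dot β γ)
  t3 : ∀ α β γ, S.tr α β = S.tr α (S.dot β γ)
  t4 : ∀ α β γ, S.st (S.tl α β) (S.tl (S.la α β) γ) = S.st β γ
  t5 : ∀ α β γ, S.dot (S.tl α β) (S.tl (S.la α β) γ) = S.tl α (S.dot β γ)
  t6 : ∀ α β γ, S.la (S.la α β) γ = S.la α (S.dot β γ)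
  t7 : ∀ α β γ, S.st (S.tr α (S.ra β γ)) (S.tr β γ) = S.st α β
  t8 : ∀ α β γ, S.ra α (S.ra β γ) = S.ra (S.dot α β) γ
  t9 : ∀ α β γ, S.dot (S.tr α (S.ra β γ)) (S.tr β γ) = S.tr (S.dot α β) γ
  t10 : ∀ α β γ, S.st (S.la α β) γ = S.st α (S.ra β γ)
  t11 : ∀ α β γ, S.dot (S.la α β) γ = S.dot α (S.ra β γ)
  t12 : ∀ α β γ, S.tl α β = S.tr β γ
  t13 : ∀ α β γ, S.st α β = S.st α (S.la β γ)
  t14 : ∀ α β γ, S.tl (S.dot α β) γ = S.tl β γ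
  t15 : ∀ α β γ, S.la (S.dot α β) γ = S.dot α (S.la β γ)
  t16 : ∀ α β γ, S.st α β = S.st α (S.dot β γ)
  t17 : ∀ α β γ, S.st (S.dot α β) γ = S.st β γ
  t18 : ∀ α β γ, S.dot (S.dot α β) γ = S.dot α (S.dot β γ)

/-- The seven axioms of an `Ω`-tridendriform algebra
(`p ω a b = a ≺_ω b`, `s ω a b = a ≻_ω b`, `o ω a b = a ∘_ω b`). -/
structure IsOmegaTridend {Ω A : Type*} [AddCommMonoid A] (S : ETSops Ω)
    (p s o : Ω → A → A → A) : Prop where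
  ax1 : ∀ α β a b c, p β (p α a b) c =
    p (S.ra α β) a (s (S.tr α β) b c) + p (S.la α β) a (p (S.tl α β) b c)
      + p (S.dot α β) a (o (S.st α β) b c)
  ax2 : ∀ α β a b c, p β (s α a b) c = s α a (p β b c)
  ax3 : ∀ α β a b c, s α a (s β b c) =
    s (S.ra α β) (s (S.tr α β) a b) c + s (S.la α β) (p (S.tl α β) a b) c
      + s (S.dot α β) (o (S.st α β) a b) c
  ax4 : ∀ α β a b c, o β (s α a b) c = s α a (o β b c)
  ax5 : ∀ α β a b c, o β (p α a b) c = o β a (s α b c)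
  ax6 : ∀ α β a b c, p β (o α a b) c = o α a (p β b c)
  ax7 : ∀ α β a b c, o β (o α a b) c = o α a (o β b c)

/-- The seven axioms of a classical tridendriform algebra
(`p a b = a ≺ b`, `s a b = a ≻ b`, `o a b = a ∘ b`). -/
structure IsTridend {A : Type*} [AddCommMonoid A] (p s o : A → A → A) : Prop where
  ax1 : ∀ a b c, p (p a b) c = p a (s b c) + p a (p b c) + p a (o b c)
  ax2 : ∀ a b c, p (s a b) c = s a (p b c)
  ax3 : ∀ a b c, s a (s b c) = s (s a b) c + s (p a b) c + s (o a b) c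
  ax4 : ∀ a b c, o (s a b) c = s a (o b c)
  ax5 : ∀ a b c, o (p a b) c = o a (s b c)
  ax6 : ∀ a b c, p (o a b) c = o a (p b c)
  ax7 : ∀ a b c, o (o a b) c = o a (o b c)

/-- An `Ω`-Rota–Baxter algebra of weight `λ_{α,β} = μ_{α*β}` yields an
`Ω`-tridendriform algebra via `a ≺_ω b = a P_ω(b)`, `a ≻_ω b = P_ω(a) b`,
`a ∘_ω b = μ_ω a b`. -/
theorem stmt6 (k : Type*) [CommRing k] {Ω A : Type*} [Ring A] [Algebra k A]
    (S : ETSops Ω) (μ : Ω → k) (P : Ω → A →ₗ[k] A)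
    (hRB : ∀ α β (a b : A), P α a * P β b =
      P (S.ra α β) (P (S.tr α β) a * b) + P (S.la α β) (a * P (S.tl α β) b)
        + μ (S.st α β) • P (S.dot α β) (a * b)) :
    IsOmegaTridend S (fun ω a b => a * P ω b) (fun ω a b => P ω a * b)
      (fun ω a b => μ ω • (a * b)) := by
  constructor <;> intro α β a b c
  · show (a * P α b) * P β c = _
    rw [mul_assoc, hRB]
    simp [mul_add, map_smul, mul_smul_comm, smul_mul_assoc]
  · exact mul_assoc _ _ _
  · show P α a * (P β b * c) = _
    rw [← mul_assoc, hRB]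
    simp [add_mul, map_smul, mul_smul_comm, smul_mul_assoc]
  · show μ β • (P α a * b * c) = _
    rw [mul_smul_comm, mul_assoc]
  · show μ β • (a * P α b * c) = _
    rw [mul_assoc]
  · show (μ α • (a * b)) * P β c = _
    rw [smul_mul_assoc, mul_assoc]
  · show μ β • (μ α • (a * b) * c) = _
    rw [mul_smul_comm, smul_mul_assoc, mul_assoc, smul_comm]
end

section
/- Let Ω be an extended triassociative semigroup and let (A, (≺_ω), (≻_ω), (∘_ω)) be an Ω-tridendriform algebra. Equip the module kΩ ⊗ A with the three bilinear products (α⊗x) ≺ (β⊗y) := (α←β) ⊗ (x ≺_{α⊲β} y), (α⊗x) ≻ (β⊗y) := (α→β) ⊗ (x ≻_{α⊳β} y), (α⊗x) ∘ (β⊗y) := (α·β) ⊗ (x ∘_{α*β} y). Then (kΩ ⊗ A, ≺, ≻, ∘) is a (classical) tridendriform algebra. -/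
/-- The product on `kΩ ⊗ A ≅ (Ω →₀ A)` induced by a label product `o`, a
type-transfer product `t`, and a family of bilinear products `m` on `A`. -/
noncomputable def prodF (k : Type*) [CommRing k] {Ω A : Type*} [AddCommGroup A] [Module k A]
    (o t : Ω → Ω → Ω) (m : Ω → A →ₗ[k] A →ₗ[k] A) :
    (Ω →₀ A) → (Ω →₀ A) → (Ω →₀ A) :=
  fun f g => f.sum fun α x => g.sum fun β y => Finsupp.single (o α β) (m (t α β) x y)

/-! Each tridendriform axiom on `kΩ ⊗ A` is an identity between maps that are additive in
each of the three arguments, so it suffices to check it on pure tensors `α⊗x, β⊗y, γ⊗z`.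
There both sides are sums of pure tensors; the ETS axioms identify their labels in `Ω`, and the
matching `Ω`-tridendriform axiom identifies their components in `A`. -/

structure Biadditive {X Y N : Type*} [Add X] [Add Y] [Add N] (B : X → Y → N) : Prop where
  add_left : ∀ a a' b, B (a + a') b = B a b + B a' b
  add_right : ∀ a b b', B a (b + b') = B a b + B a b'

structure Triadditive {X Y Z N : Type*} [Add X] [Add Y] [Add Z] [Add N]
    (F : X → Y → Z → N) : Prop where
  add₁ : ∀ a a' b c, F (a + a') b c = F a b c + F a' b c
  add₂ : ∀ a b b' c, F a (b + b') c = F a b c + F a b' c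
  add₃ : ∀ a b c c', F a b (c + c') = F a b c + F a b c'

section Multiadditive

variable {W X Y Z N : Type*} [Add W] [Add X] [Add Y] [Add Z] [AddCommSemigroup N]

theorem Biadditive.comp_left {B : W → Z → N} {C : X → Y → W} (hB : Biadditive B)
    (hC : Biadditive C) : Triadditive fun a b c => B (C a b) c where
  add₁ a a' b c := by rw [hC.add_left, hB.add_left]
  add₂ a b b' c := by rw [hC.add_right, hB.add_left]
  add₃ a b c c' := hB.add_right _ _ _

theorem Biadditive.comp_right {B : X → W → N} {C : Y → Z → W} (hB : Biadditive B)
    (hC : Biadditive C) : Triadditive fun a b c => B a (C b c) where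
  add₁ a a' b c := hB.add_left _ _ _
  add₂ a b b' c := by rw [hC.add_left, hB.add_right]
  add₃ a b c c' := by rw [hC.add_right, hB.add_right]

theorem Triadditive.add {F G : X → Y → Z → N} (hF : Triadditive F) (hG : Triadditive G) :
    Triadditive fun a b c => F a b c + G a b c where
  add₁ a a' b c := by rw [hF.add₁, hG.add₁, add_add_add_comm]
  add₂ a b b' c := by rw [hF.add₂, hG.add₂, add_add_add_comm]
  add₃ a b c c' := by rw [hF.add₃, hG.add₃, add_add_add_comm]

end Multiadditive

section Zero

variable {X Y Z N : Type*} [AddZeroClass X] [AddZeroClass Y] [AddZeroClass Z] [AddCommGroup N]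
  {F : X → Y → Z → N}

theorem Triadditive.apply_zero₁ (hF : Triadditive F) (b : Y) (c : Z) : F 0 b c = 0 := by
  simpa using hF.add₁ 0 0 b c

theorem Triadditive.apply_zero₂ (hF : Triadditive F) (a : X) (c : Z) : F a 0 c = 0 := by
  simpa using hF.add₂ a 0 0 c

theorem Triadditive.apply_zero₃ (hF : Triadditive F) (a : X) (b : Y) : F a b 0 = 0 := by
  simpa using hF.add₃ a b 0 0

end Zero

theorem Triadditive.eq_of_eq_single {ι₁ ι₂ ι₃ A₁ A₂ A₃ N : Type*} [AddCommMonoid A₁]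
    [AddCommMonoid A₂] [AddCommMonoid A₃] [AddCommGroup N]
    {F G : (ι₁ →₀ A₁) → (ι₂ →₀ A₂) → (ι₃ →₀ A₃) → N} (hF : Triadditive F)
    (hG : Triadditive G)
    (h : ∀ α β γ x y z, F (.single α x) (.single β y) (.single γ z) =
      G (.single α x) (.single β y) (.single γ z)) :
    ∀ a b c, F a b c = G a b c := by
  intro a b c
  induction a using Finsupp.induction_linear generalizing b c with
  | zero => rw [hF.apply_zero₁, hG.apply_zero₁]
  | add a a' ha ha' => rw [hF.add₁, hG.add₁, ha, ha']
  | single α x =>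
    induction b using Finsupp.induction_linear generalizing c with
    | zero => rw [hF.apply_zero₂, hG.apply_zero₂]
    | add b b' hb hb' => rw [hF.add₂, hG.add₂, hb, hb']
    | single β y =>
      induction c using Finsupp.induction_linear with
      | zero => rw [hF.apply_zero₃, hG.apply_zero₃]
      | add c c' hc hc' => rw [hF.add₃, hG.add₃, hc, hc']
      | single γ z => exact h α β γ x y z

section ProdF

variable {k : Type*} [CommRing k] {Ω A : Type*} [AddCommGroup A] [Module k A]
  {o t : Ω → Ω → Ω} {m : Ω → A →ₗ[k] A →ₗ[k] A}

theorem prodF_single (α β : Ω) (x y : A) :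
    prodF k o t m (.single α x) (.single β y) = .single (o α β) (m (t α β) x y) := by
  rw [prodF, Finsupp.sum_single_index, Finsupp.sum_single_index] <;> simp

theorem biadditive_prodF : Biadditive (prodF k o t m) where
  add_left f f' g := by
    unfold prodF
    rw [Finsupp.sum_add_index'] <;> simp [Finsupp.sum_add]
  add_right f g g' := by
    unfold prodF
    rw [← Finsupp.sum_add]
    congr 1
    ext α x
    rw [Finsupp.sum_add_index'] <;> simp

end ProdF

section ETS

variable {k : Type*} [CommRing k] {Ω A : Type*} [AddCommGroup A] [Module k A]
  {S : ETSops Ω} {p s o : Ω → A →ₗ[k] A →ₗ[k] A}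

local infixl:70 " ≺ " => prodF k S.la S.tl p
local infixl:70 " ≻ " => prodF k S.ra S.tr s
local infixl:70 " ⊙ " => prodF k S.dot S.st o

variable (hS : IsETS S)
  (hT : IsOmegaTridend S (fun ω a b => p ω a b) (fun ω a b => s ω a b) (fun ω a b => o ω a b))

include hS hT in
theorem prodF_prec_prec :
    ∀ a b c : Ω →₀ A, a ≺ b ≺ c = a ≺ (b ≻ c) + a ≺ (b ≺ c) + a ≺ (b ⊙ c) := by
  refine Triadditive.eq_of_eq_single (biadditive_prodF.comp_left biadditive_prodF)
    (((biadditive_prodF.comp_right biadditive_prodF).add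
      (biadditive_prodF.comp_right biadditive_prodF)).add
      (biadditive_prodF.comp_right biadditive_prodF)) fun α β γ x y z => ?_
  simp only [prodF_single]
  rw [hT.ax1 (S.tl α β) (S.tl (S.la α β) γ), hS.e3, hS.e4, hS.e5, hS.e6, hS.t4, hS.t5,
    ← hS.d2, ← hS.t6, ← hS.d1, ← Finsupp.single_add, ← Finsupp.single_add]

include hS hT in
theorem prodF_succ_prec : ∀ a b c : Ω →₀ A, a ≻ b ≺ c = a ≻ (b ≺ c) := by
  refine Triadditive.eq_of_eq_single (biadditive_prodF.comp_left biadditive_prodF)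
    (biadditive_prodF.comp_right biadditive_prodF) fun α β γ x y z => ?_
  simp only [prodF_single]
  rw [hS.d3, hS.e2, hS.e1]
  exact congrArg _ (hT.ax2 ..)

include hS hT in
theorem prodF_succ_succ :
    ∀ a b c : Ω →₀ A, a ≻ (b ≻ c) = a ≻ b ≻ c + (a ≺ b) ≻ c + (a ⊙ b) ≻ c := by
  refine Triadditive.eq_of_eq_single (biadditive_prodF.comp_right biadditive_prodF)
    (((biadditive_prodF.comp_left biadditive_prodF).add
      (biadditive_prodF.comp_left biadditive_prodF)).add
      (biadditive_prodF.comp_left biadditive_prodF)) fun α β γ x y z => ?_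
  simp only [prodF_single]
  rw [hT.ax3 (S.tr α (S.ra β γ)) (S.tr β γ), hS.e7, hS.e8, hS.e9, hS.e10, hS.t7, hS.t9,
    hS.d4, hS.d5, ← hS.t8, ← Finsupp.single_add, ← Finsupp.single_add]

include hS hT in
theorem prodF_succ_circ : ∀ a b c : Ω →₀ A, a ≻ b ⊙ c = a ≻ (b ⊙ c) := by
  refine Triadditive.eq_of_eq_single (biadditive_prodF.comp_left biadditive_prodF)
    (biadditive_prodF.comp_right biadditive_prodF) fun α β γ x y z => ?_
  simp only [prodF_single]
  rw [hS.t2, hS.t1, ← hS.t3]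
  exact congrArg _ (hT.ax4 ..)

include hS hT in
theorem prodF_prec_circ : ∀ a b c : Ω →₀ A, a ≺ b ⊙ c = a ⊙ (b ≻ c) := by
  refine Triadditive.eq_of_eq_single (biadditive_prodF.comp_left biadditive_prodF)
    (biadditive_prodF.comp_right biadditive_prodF) fun α β γ x y z => ?_
  simp only [prodF_single]
  rw [hS.t11, hS.t10, hS.t12 α β γ]
  exact congrArg _ (hT.ax5 ..)

include hS hT in
theorem prodF_circ_prec : ∀ a b c : Ω →₀ A, a ⊙ b ≺ c = a ⊙ (b ≺ c) := by
  refine Triadditive.eq_of_eq_single (biadditive_prodF.comp_left biadditive_prodF)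
    (biadditive_prodF.comp_right biadditive_prodF) fun α β γ x y z => ?_
  simp only [prodF_single]
  rw [hS.t15, hS.t14, ← hS.t13]
  exact congrArg _ (hT.ax6 ..)

include hS hT in
theorem prodF_circ_circ : ∀ a b c : Ω →₀ A, a ⊙ b ⊙ c = a ⊙ (b ⊙ c) := by
  refine Triadditive.eq_of_eq_single (biadditive_prodF.comp_left biadditive_prodF)
    (biadditive_prodF.comp_right biadditive_prodF) fun α β γ x y z => ?_
  simp only [prodF_single]
  rw [hS.t18, hS.t17, ← hS.t16]
  exact congrArg _ (hT.ax7 ..)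

end ETS

/-- If `Ω` is an ETS and `A` an `Ω`-tridendriform algebra, then `kΩ ⊗ A` with
`(α⊗x) ≺ (β⊗y) = (α←β)⊗(x ≺_{α⊲β} y)`, `(α⊗x) ≻ (β⊗y) = (α→β)⊗(x ≻_{α⊳β} y)`,
`(α⊗x) ∘ (β⊗y) = (α·β)⊗(x ∘_{α*β} y)` is a classical tridendriform algebra. -/
theorem stmt9 (k : Type*) [CommRing k] {Ω A : Type*} [AddCommGroup A] [Module k A]
    (S : ETSops Ω) (hS : IsETS S) (p s o : Ω → A →ₗ[k] A →ₗ[k] A)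
    (hT : IsOmegaTridend S (fun ω a b => p ω a b) (fun ω a b => s ω a b)
      (fun ω a b => o ω a b)) :
    IsTridend (prodF k S.la S.tl p) (prodF k S.ra S.tr s) (prodF k S.dot S.st o) :=
  ⟨prodF_prec_prec hS hT, prodF_succ_prec hS hT, prodF_succ_succ hS hT, prodF_succ_circ hS hT,
    prodF_prec_circ hS hT, prodF_circ_prec hS hT, prodF_circ_circ hS hT⟩
end

section
/- Let Ω be an extended triassociative semigroup, A a module with bilinear products ≺_ω, ≻_ω, ∘_ω (ω ∈ Ω), and suppose that the three maps φ_← : kΩ⊗kΩ → kΩ⊗kΩ, α⊗β ↦ (α←β)⊗(α⊲β), φ_→ : α⊗β ↦ (α→β)⊗(α⊳β), and φ_* : α⊗β ↦ (α·β)⊗(α*β) are surjective. If kΩ ⊗ A, with the products (α⊗x) ≺ (β⊗y) = (α←β)⊗(x≺_{α⊲β}y), (α⊗x) ≻ (β⊗y) = (α→β)⊗(x≻_{α⊳β}y), (α⊗x) ∘ (β⊗y) = (α·β)⊗(x∘_{α*β}y), is a classical tridendriform algebra, then (A, (≺_ω), (≻_ω), (∘_ω)) is an Ω-tridendriform algebra.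 -/
/-- Product of two `Finsupp.single`s under `prodF`. -/
lemma prodF_single_single (k : Type*) [CommRing k] {Ω A : Type*} [AddCommGroup A] [Module k A]
    (o t : Ω → Ω → Ω) (m : Ω → A →ₗ[k] A →ₗ[k] A) (α β : Ω) (x y : A) :
    prodF k o t m (Finsupp.single α x) (Finsupp.single β y)
      = Finsupp.single (o α β) (m (t α β) x y) := by
  classical
  unfold prodF
  rw [Finsupp.sum_single_index, Finsupp.sum_single_index] <;> simp

/-- (Converse.) If the three structure maps `φ_←, φ_→, φ_*` are surjective and
`kΩ ⊗ A` is a classical tridendriform algebra, then `A` is `Ω`-tridendriform. -/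
theorem stmt10 (k : Type*) [CommRing k] {Ω A : Type*} [AddCommGroup A] [Module k A]
    (S : ETSops Ω) (hS : IsETS S) (p s o : Ω → A →ₗ[k] A →ₗ[k] A)
    (hla : Function.Surjective fun q : Ω × Ω => (S.la q.1 q.2, S.tl q.1 q.2))
    (hra : Function.Surjective fun q : Ω × Ω => (S.ra q.1 q.2, S.tr q.1 q.2))
    (hdot : Function.Surjective fun q : Ω × Ω => (S.dot q.1 q.2, S.st q.1 q.2))
    (hT : IsTridend (prodF k S.la S.tl p) (prodF k S.ra S.tr s) (prodF k S.dot S.st o)) :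
    IsOmegaTridend S (fun ω a b => p ω a b) (fun ω a b => s ω a b)
      (fun ω a b => o ω a b) := by
  classical
  -- Step 1: surjectivity of `φ_→` together with `t12` forces `⊲`/`⊳` to be projections.
  have htl0 : ∀ α β : Ω, S.tl α β = S.tl β β :=
    fun α β => (hS.t12 α β β).trans (hS.t12 β β β).symm
  have htr0 : ∀ α β : Ω, S.tr α β = S.tl α α :=
    fun α β => (hS.t12 α α β).symm
  have hid : ∀ ω : Ω, S.tl ω ω = ω := by
    intro ω
    obtain ⟨q, hq⟩ := hra (ω, ω)
    have h1 : S.tl q.1 q.1 = ω := (htr0 q.1 q.2).symm.trans (congrArg Prod.snd hq)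
    have h2 := hS.e6 q.1 q.1 q.1
    rw [htr0, htr0, htl0 (S.tl q.1 q.1)] at h2
    rw [h1] at h2
    exact h2
  have htl : ∀ α β : Ω, S.tl α β = β := fun α β => (htl0 α β).trans (hid β)
  have htr : ∀ α β : Ω, S.tr α β = α := fun α β => (htr0 α β).trans (hid α)
  refine { ax1 := ?_, ax2 := ?_, ax3 := ?_, ax4 := ?_, ax5 := ?_, ax6 := ?_, ax7 := ?_ }
  · -- ax1
    intro ω₁ ω₂ a b c
    have H := hT.ax1 (Finsupp.single ω₁ a) (Finsupp.single ω₁ b) (Finsupp.single ω₂ c)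
    simp only [prodF_single_single, htl, htr] at H
    rw [← hS.d2 ω₁ ω₁ ω₂, ← hS.d1 ω₁ ω₁ ω₂, ← hS.t6 ω₁ ω₁ ω₂,
      ← Finsupp.single_add, ← Finsupp.single_add] at H
    simp only [htl, htr]
    exact Finsupp.single_injective _ H
  · -- ax2
    intro ω₁ ω₂ a b c
    have H := hT.ax2 (Finsupp.single ω₁ a) (Finsupp.single ω₁ b) (Finsupp.single ω₂ c)
    simp only [prodF_single_single, htl, htr] at H
    rw [hS.d3 ω₁ ω₁ ω₂] at H
    exact Finsupp.single_injective _ H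
  · -- ax3
    intro ω₁ ω₂ a b c
    have H := hT.ax3 (Finsupp.single ω₁ a) (Finsupp.single ω₂ b) (Finsupp.single ω₂ c)
    simp only [prodF_single_single, htl, htr] at H
    rw [hS.d4 ω₁ ω₂ ω₂, hS.d5 ω₁ ω₂ ω₂, ← hS.t8 ω₁ ω₂ ω₂,
      ← Finsupp.single_add, ← Finsupp.single_add] at H
    simp only [htl, htr]
    exact Finsupp.single_injective _ H
  · -- ax4
    intro ω₁ ω₂ a b c
    obtain ⟨q, hq⟩ := hdot (ω₂, ω₂)
    have hst : S.st q.1 q.2 = ω₂ := congrArg Prod.snd hq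
    have H := hT.ax4 (Finsupp.single ω₁ a) (Finsupp.single q.1 b) (Finsupp.single q.2 c)
    simp only [prodF_single_single, htl, htr] at H
    rw [hS.t2 ω₁ q.1 q.2, hS.t1 ω₁ q.1 q.2, hst] at H
    exact Finsupp.single_injective _ H
  · -- ax5
    intro ω₁ ω₂ a b c
    obtain ⟨q, hq⟩ := hdot (ω₂, ω₂)
    have hst : S.st q.1 q.2 = ω₂ := congrArg Prod.snd hq
    obtain ⟨r, hr⟩ := hla (q.1, ω₁)
    have hr1 : S.la r.1 r.2 = q.1 := congrArg Prod.fst hr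
    have hr2 : r.2 = ω₁ := (htl r.1 r.2).symm.trans (congrArg Prod.snd hr)
    have H := hT.ax5 (Finsupp.single r.1 a) (Finsupp.single r.2 b) (Finsupp.single q.2 c)
    simp only [prodF_single_single, htl, htr] at H
    rw [← hS.t11 r.1 r.2 q.2, ← hS.t10 r.1 r.2 q.2, hr1, hst, hr2] at H
    exact Finsupp.single_injective _ H
  · -- ax6
    intro ω₁ ω₂ a b c
    obtain ⟨q, hq⟩ := hdot (ω₁, ω₁)
    have hst : S.st q.1 q.2 = ω₁ := congrArg Prod.snd hq
    have H := hT.ax6 (Finsupp.single q.1 a) (Finsupp.single q.2 b) (Finsupp.single ω₂ c)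
    simp only [prodF_single_single, htl, htr] at H
    rw [hS.t15 q.1 q.2 ω₂, ← hS.t13 q.1 q.2 ω₂, hst] at H
    exact Finsupp.single_injective _ H
  · -- ax7
    intro ω₁ ω₂ a b c
    obtain ⟨q, hq⟩ := hdot (ω₁, ω₁)
    have hstq : S.st q.1 q.2 = ω₁ := congrArg Prod.snd hq
    obtain ⟨r, hr⟩ := hdot (ω₂, ω₂)
    have hstr : S.st r.1 r.2 = ω₂ := congrArg Prod.snd hr
    have H := hT.ax7 (Finsupp.single q.1 a) (Finsupp.single (S.dot q.2 r.1) b)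
      (Finsupp.single r.2 c)
    simp only [prodF_single_single] at H
    rw [hS.t18 q.1 (S.dot q.2 r.1) r.2, hS.t17 q.1 (S.dot q.2 r.1) r.2,
      hS.t17 q.2 r.1 r.2, ← hS.t16 q.1 (S.dot q.2 r.1) r.2, ← hS.t16 q.1 q.2 r.1,
      hstq, hstr] at H
    exact Finsupp.single_injective _ H
end

section
/- Let Ω be an extended triassociative semigroup, A an Ω-tridendriform algebra, and a = Σ_α a_α α, b = Σ_α b_α α, c = Σ_α c_α α finitely supported families of scalars indexed by Ω. Suppose the following conditions hold for all α,β ∈ Ω: a_α a_β = Σ_{(α',β'): α'←β'=α, α'⊲β'=β} a_{α'} a_{β'}; a_α b_β = Σ_{(α',β'): α'·β'=α, α'*β'=β} a_{α'} a_{β'}; a_α c_β = Σ_{(α',β'): α'→β'=α, α'⊳β'=β} a_{α'} a_{β'}; b_α c_β = b_α a_β; c_α a_β = Σ_{(α',β'): α'←β'=α, α'⊲β'=β} c_{α'} c_{β'}; c_α b_β = Σ_{(α',β'): α'·β'=α, α'*β'=β} c_{α'} c_{β'}; c_α c_β = Σ_{(α',β'): α'→β'=α, α'⊳β'=β} c_{α'}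 c_{β'}. Then the bilinear product m(x,y) := Σ_α a_α (x ≺_α y) + Σ_α b_α (x ∘_α y) + Σ_α c_α (x ≻_α y) is associative on A. -/
lemma auxFiber {k : Type*} [CommRing k] {Ω A : Type*} [DecidableEq Ω]
    [AddCommGroup A] [Module k A]
    (P : Finset (Ω × Ω)) (f : Ω × Ω → k) (g1 g2 : Ω → Ω → Ω) (u v : Ω →₀ k)
    (h : ∀ γ δ, u γ * v δ = ∑ q ∈ P.filter (fun q => g1 q.1 q.2 = γ ∧ g2 q.1 q.2 = δ), f q)
    (F : Ω → Ω → A) :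
    ∑ q ∈ P, f q • F (g1 q.1 q.2) (g2 q.1 q.2)
      = ∑ r ∈ u.support ×ˢ v.support, (u r.1 * v r.2) • F r.1 r.2 := by
  classical
  set g : Ω × Ω → Ω × Ω := fun q => (g1 q.1 q.2, g2 q.1 q.2) with hg
  have h' : ∀ r : Ω × Ω, u r.1 * v r.2 = ∑ q ∈ P.filter (fun q => g q = r), f q := by
    intro r
    rw [h r.1 r.2]
    congr 1
    apply Finset.filter_congr
    intro q _
    simp [hg, Prod.ext_iff]
  have step1 : ∑ q ∈ P, f q • F (g1 q.1 q.2) (g2 q.1 q.2)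
      = ∑ r ∈ P.image g, (u r.1 * v r.2) • F r.1 r.2 := by
    rw [← Finset.sum_fiberwise_of_maps_to (g := g)
      (fun q hq => Finset.mem_image_of_mem g hq) (fun q => f q • F (g1 q.1 q.2) (g2 q.1 q.2))]
    refine Finset.sum_congr rfl fun r hr => ?_
    rw [h' r, Finset.sum_smul]
    refine Finset.sum_congr rfl fun q hq => ?_
    have : g q = r := (Finset.mem_filter.mp hq).2
    rw [← this]
  rw [step1]
  have e1 : ∑ r ∈ P.image g, (u r.1 * v r.2) • F r.1 r.2
      = ∑ r ∈ P.image g ∪ u.support ×ˢ v.support, (u r.1 * v r.2) • F r.1 r.2 := by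
    refine Finset.sum_subset Finset.subset_union_left fun r _ hr => ?_
    have : P.filter (fun q => g q = r) = ∅ := by
      refine Finset.filter_eq_empty_iff.mpr fun q hq => ?_
      intro hgq
      exact hr (hgq ▸ Finset.mem_image_of_mem g hq)
    rw [h' r, this, Finset.sum_empty, zero_smul]
  have e2 : ∑ r ∈ u.support ×ˢ v.support, (u r.1 * v r.2) • F r.1 r.2
      = ∑ r ∈ P.image g ∪ u.support ×ˢ v.support, (u r.1 * v r.2) • F r.1 r.2 := by
    refine Finset.sum_subset Finset.subset_union_right fun r _ hr => ?_
    rw [Finset.mem_product] at hr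
    push_neg at hr
    by_cases h1 : r.1 ∈ u.support
    · have := hr h1
      rw [Finsupp.notMem_support_iff.mp this, mul_zero, zero_smul]
    · rw [Finsupp.notMem_support_iff.mp h1, zero_mul, zero_smul]
  rw [e1, ← e2]

/-- Associativity criterion for `m = Σ a_α ≺_α + Σ b_α ∘_α + Σ c_α ≻_α` in an
`Ω`-tridendriform algebra over an ETS. -/
theorem stmt11 {k : Type*} [CommRing k] {Ω A : Type*} [DecidableEq Ω]
    [AddCommGroup A] [Module k A]
    (S : ETSops Ω) (hS : IsETS S) (p s o : Ω → A →ₗ[k] A →ₗ[k] A)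
    (hT : IsOmegaTridend S (fun ω x y => p ω x y) (fun ω x y => s ω x y)
      (fun ω x y => o ω x y))
    (ca cb cc : Ω →₀ k)
    (h1 : ∀ α β, ca α * ca β = ∑ q ∈ (ca.support ×ˢ ca.support).filter
        (fun q => S.la q.1 q.2 = α ∧ S.tl q.1 q.2 = β), ca q.1 * ca q.2)
    (h2 : ∀ α β, ca α * cb β = ∑ q ∈ (ca.support ×ˢ ca.support).filter
        (fun q => S.dot q.1 q.2 = α ∧ S.st q.1 q.2 = β), ca q.1 * ca q.2)
    (h3 : ∀ α β, ca α * cc β = ∑ q ∈ (ca.support ×ˢ ca.support).filter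
        (fun q => S.ra q.1 q.2 = α ∧ S.tr q.1 q.2 = β), ca q.1 * ca q.2)
    (h4 : ∀ α β, cb α * cc β = cb α * ca β)
    (h5 : ∀ α β, cc α * ca β = ∑ q ∈ (cc.support ×ˢ cc.support).filter
        (fun q => S.la q.1 q.2 = α ∧ S.tl q.1 q.2 = β), cc q.1 * cc q.2)
    (h6 : ∀ α β, cc α * cb β = ∑ q ∈ (cc.support ×ˢ cc.support).filter
        (fun q => S.dot q.1 q.2 = α ∧ S.st q.1 q.2 = β), cc q.1 * cc q.2)
    (h7 : ∀ α β, cc α * cc β = ∑ q ∈ (cc.support ×ˢ cc.support).filter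
        (fun q => S.ra q.1 q.2 = α ∧ S.tr q.1 q.2 = β), cc q.1 * cc q.2)
    (m : A → A → A)
    (hm : ∀ x y, m x y = ca.sum (fun α t => t • p α x y)
      + cb.sum (fun α t => t • o α x y) + cc.sum (fun α t => t • s α x y)) :
    ∀ x y z, m (m x y) z = m x (m y z) := by
  classical
  intro x y z
  have hB1 : ∀ (B : A →ₗ[k] A →ₗ[k] A) (t : Finset Ω) (f : Ω → k) (u : Ω → A) (w : A),
      B (∑ α ∈ t, f α • u α) w = ∑ α ∈ t, f α • B (u α) w := by
    intro B t f u w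
    rw [map_sum, LinearMap.sum_apply]
    refine Finset.sum_congr rfl fun α _ => ?_
    rw [map_smul, LinearMap.smul_apply]
  have hB2 : ∀ (B : A →ₗ[k] A →ₗ[k] A) (v : A) (t : Finset Ω) (f : Ω → k) (u : Ω → A),
      B v (∑ α ∈ t, f α • u α) = ∑ α ∈ t, f α • B v (u α) := by
    intro B v t f u
    rw [map_sum]
    exact Finset.sum_congr rfl fun α _ => (B v).map_smul _ _
  have hm' : ∀ u v, m u v = ∑ α ∈ ca.support, ca α • p α u v
      + ∑ α ∈ cb.support, cb α • o α u v + ∑ α ∈ cc.support, cc α • s α u v := by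
    intro u v; rw [hm]; rfl
  rw [hm' (m x y) z, hm' x (m y z), hm' x y, hm' y z]
  simp only [map_add, LinearMap.add_apply, hB1, hB2, smul_add, Finset.smul_sum, smul_smul,
    Finset.sum_add_distrib]
  simp only [hT.ax1, hT.ax2, hT.ax3, hT.ax4, hT.ax5, hT.ax6, hT.ax7, smul_add,
    Finset.sum_add_distrib]
  -- matching lemmas
  have M1 : (∑ β ∈ ca.support, ∑ α ∈ ca.support,
        (ca β * ca α) • p (S.ra α β) x (s (S.tr α β) y z))
      = ∑ β ∈ ca.support, ∑ α ∈ cc.support, (ca β * cc α) • p β x (s α y z) := by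
    have hf := auxFiber (ca.support ×ˢ ca.support) (fun q => ca q.1 * ca q.2) S.ra S.tr
      ca cc h3 (fun γ δ => p γ x (s δ y z))
    simp only [Finset.sum_product] at hf
    rw [Finset.sum_comm, ← hf]
    exact Finset.sum_congr rfl fun a _ => Finset.sum_congr rfl fun b _ => by rw [mul_comm]
  have M2 : (∑ β ∈ ca.support, ∑ α ∈ ca.support,
        (ca β * ca α) • p (S.la α β) x (p (S.tl α β) y z))
      = ∑ β ∈ ca.support, ∑ α ∈ ca.support, (ca β * ca α) • p β x (p α y z) := by
    have hf := auxFiber (ca.support ×ˢ ca.support) (fun q => ca q.1 * ca q.2) S.la S.tl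
      ca ca h1 (fun γ δ => p γ x (p δ y z))
    simp only [Finset.sum_product] at hf
    rw [Finset.sum_comm, ← hf]
    exact Finset.sum_congr rfl fun a _ => Finset.sum_congr rfl fun b _ => by rw [mul_comm]
  have M3 : (∑ β ∈ ca.support, ∑ α ∈ ca.support,
        (ca β * ca α) • p (S.dot α β) x (o (S.st α β) y z))
      = ∑ β ∈ ca.support, ∑ α ∈ cb.support, (ca β * cb α) • p β x (o α y z) := by
    have hf := auxFiber (ca.support ×ˢ ca.support) (fun q => ca q.1 * ca q.2) S.dot S.st
      ca cb h2 (fun γ δ => p γ x (o δ y z))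
    simp only [Finset.sum_product] at hf
    rw [Finset.sum_comm, ← hf]
    exact Finset.sum_congr rfl fun a _ => Finset.sum_congr rfl fun b _ => by rw [mul_comm]
  have M4 : (∑ β ∈ ca.support, ∑ α ∈ cb.support, (ca β * cb α) • o α x (p β y z))
      = ∑ β ∈ cb.support, ∑ α ∈ ca.support, (cb β * ca α) • o β x (p α y z) := by
    rw [Finset.sum_comm]
    exact Finset.sum_congr rfl fun a _ => Finset.sum_congr rfl fun b _ => by rw [mul_comm]
  have M5 : (∑ β ∈ ca.support, ∑ α ∈ cc.support, (ca β * cc α) • s α x (p β y z))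
      = ∑ β ∈ cc.support, ∑ α ∈ ca.support, (cc β * ca α) • s β x (p α y z) := by
    rw [Finset.sum_comm]
    exact Finset.sum_congr rfl fun a _ => Finset.sum_congr rfl fun b _ => by rw [mul_comm]
  have M6 : (∑ β ∈ cb.support, ∑ α ∈ ca.support, (cb β * ca α) • o β x (s α y z))
      = ∑ β ∈ cb.support, ∑ α ∈ cc.support, (cb β * cc α) • o β x (s α y z) := by
    refine Finset.sum_congr rfl fun β _ => ?_
    have e1 : (∑ α ∈ ca.support, (cb β * ca α) • o β x (s α y z))
        = ∑ α ∈ ca.support ∪ cc.support, (cb β * ca α) • o β x (s α y z) :=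
      Finset.sum_subset Finset.subset_union_left fun α _ hα => by
        rw [Finsupp.notMem_support_iff.mp hα, mul_zero, zero_smul]
    have e2 : (∑ α ∈ cc.support, (cb β * cc α) • o β x (s α y z))
        = ∑ α ∈ ca.support ∪ cc.support, (cb β * cc α) • o β x (s α y z) :=
      Finset.sum_subset Finset.subset_union_right fun α _ hα => by
        rw [Finsupp.notMem_support_iff.mp hα, mul_zero, zero_smul]
    rw [e1, e2]
    exact Finset.sum_congr rfl fun α _ => by rw [← h4 β α]
  have M7 : (∑ β ∈ cb.support, ∑ α ∈ cb.support, (cb β * cb α) • o α x (o β y z))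
      = ∑ β ∈ cb.support, ∑ α ∈ cb.support, (cb β * cb α) • o β x (o α y z) := by
    rw [Finset.sum_comm]
    exact Finset.sum_congr rfl fun a _ => Finset.sum_congr rfl fun b _ => by rw [mul_comm]
  have M8 : (∑ β ∈ cb.support, ∑ α ∈ cc.support, (cb β * cc α) • s α x (o β y z))
      = ∑ β ∈ cc.support, ∑ α ∈ cb.support, (cc β * cb α) • s β x (o α y z) := by
    rw [Finset.sum_comm]
    exact Finset.sum_congr rfl fun a _ => Finset.sum_congr rfl fun b _ => by rw [mul_comm]
  have M9 : (∑ β ∈ cc.support, ∑ α ∈ cc.support,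
        (cc β * cc α) • s (S.la β α) (p (S.tl β α) x y) z)
      = ∑ β ∈ cc.support, ∑ α ∈ ca.support, (cc β * ca α) • s β (p α x y) z := by
    have hf := auxFiber (cc.support ×ˢ cc.support) (fun q => cc q.1 * cc q.2) S.la S.tl
      cc ca h5 (fun γ δ => s γ (p δ x y) z)
    simp only [Finset.sum_product] at hf
    exact hf
  have M10 : (∑ β ∈ cc.support, ∑ α ∈ cc.support,
        (cc β * cc α) • s (S.dot β α) (o (S.st β α) x y) z)
      = ∑ β ∈ cc.support, ∑ α ∈ cb.support, (cc β * cb α) • s β (o α x y) z := by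
    have hf := auxFiber (cc.support ×ˢ cc.support) (fun q => cc q.1 * cc q.2) S.dot S.st
      cc cb h6 (fun γ δ => s γ (o δ x y) z)
    simp only [Finset.sum_product] at hf
    exact hf
  have M11 : (∑ β ∈ cc.support, ∑ α ∈ cc.support,
        (cc β * cc α) • s (S.ra β α) (s (S.tr β α) x y) z)
      = ∑ β ∈ cc.support, ∑ α ∈ cc.support, (cc β * cc α) • s β (s α x y) z := by
    have hf := auxFiber (cc.support ×ˢ cc.support) (fun q => cc q.1 * cc q.2) S.ra S.tr
      cc cc h7 (fun γ δ => s γ (s δ x y) z)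
    simp only [Finset.sum_product] at hf
    exact hf
  rw [M1, M2, M3, M4, M5, M6, M7, M8, M9, M10, M11]
  abel
end

section
/- Let Ω be an extended triassociative semigroup and let (A, (⋆_ω)_{ω∈Ω}) be a matching associative algebra. On the space sh⁺(A) = ⊕_{n≥1} A ⊗ (kΩ ⊗ A)^{⊗(n-1)} of Ω-typed words, define products ≺_ω, ≻_ω, ∘_ω recursively: for typed words a = a₁ ⊗_{α₁} a' and b = b₁ ⊗_{β₁} b' (with the conventions for length-one words as in the paper, using a formal unit 1 satisfying 1≻_ω a = a≺_ω 1 = a, 1≺_ω a = a≻_ω 1 = 0, 1∘_ω a = a∘_ω 1 = 0), set a ≺_ω b = a₁ ⊗_{α₁→ω} (a' ≻_{α₁⊳ω} b) + a₁ ⊗_{α₁←ω} (a' ≺_{α₁⊲ω} b) + a₁ ⊗_{α₁·ω} (a' ∘_{α₁*ω} b), a ≻_ω b = b₁ ⊗_{ω→β₁} (a ≻_{ω⊳β₁} b') + b₁ ⊗_{ω←β₁} (a ≺_{ω⊲β₁} b') + b₁ ⊗_{ω·β₁} (a ∘_{ω*β₁} b'), a ∘_ω b = (a₁ ⋆_ω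 b₁) ⊗_{α₁→β₁} (a' ≻_{α₁⊳β₁} b') + (a₁ ⋆_ω b₁) ⊗_{α₁←β₁} (a' ≺_{α₁⊲β₁} b') + (a₁ ⋆_ω b₁) ⊗_{α₁·β₁} (a' ∘_{α₁*β₁} b'). Then sh⁺(A) is an Ω-tridendriform algebra. -/
/-- An `Ω`-typed word in `A`: a head entry together with a list of typed entries. -/
abbrev TW (Ω A : Type*) := A × List (Ω × A)

/-- A single typed word, seen in the free module on typed words. -/
noncomputable def sg {Ω A : Type*} (w : TW Ω A) : TW Ω A →₀ ℤ := Finsupp.single w 1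

/-- Prepend a head `x` with type `τ` to every word of a formal sum of typed words. -/
noncomputable def consW {Ω A : Type*} (x : A) (τ : Ω) (f : TW Ω A →₀ ℤ) : TW Ω A →₀ ℤ :=
  Finsupp.mapDomain (fun w => (x, (τ, w.1) :: w.2)) f

/-- Bilinear extension of a product of typed words to formal sums of typed words. -/
noncomputable def extW {Ω A : Type*} (f : TW Ω A → TW Ω A → (TW Ω A →₀ ℤ)) :
    (TW Ω A →₀ ℤ) → (TW Ω A →₀ ℤ) → (TW Ω A →₀ ℤ) :=
  fun x y => x.sum fun u m => y.sum fun v n => (m * n) • f u v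

namespace Stmt13H

variable {Ω A : Type*}

lemma extW_add_left (f : TW Ω A → TW Ω A → (TW Ω A →₀ ℤ)) (X Y Z : TW Ω A →₀ ℤ) :
    extW f (X + Y) Z = extW f X Z + extW f Y Z := by
  unfold extW
  refine Finsupp.sum_add_index' (fun u => ?_) (fun u m₁ m₂ => ?_)
  · simp
  · simp [add_mul, add_smul, Finsupp.sum_add]

lemma extW_add_right (f : TW Ω A → TW Ω A → (TW Ω A →₀ ℤ)) (X Y Z : TW Ω A →₀ ℤ) :
    extW f X (Y + Z) = extW f X Y + extW f X Z := by
  unfold extW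
  rw [← Finsupp.sum_add]
  refine Finsupp.sum_congr fun u _ => ?_
  refine Finsupp.sum_add_index' (fun v => ?_) (fun v n₁ n₂ => ?_)
  · simp
  · simp [mul_add, add_smul]

lemma extW_sg_left (f : TW Ω A → TW Ω A → (TW Ω A →₀ ℤ)) (u : TW Ω A) (Y : TW Ω A →₀ ℤ) :
    extW f (sg u) Y = Y.sum fun v n => n • f u v := by
  unfold extW sg
  rw [Finsupp.sum_single_index (by simp)]
  simp only [one_mul]

lemma extW_sg_right (f : TW Ω A → TW Ω A → (TW Ω A →₀ ℤ)) (v : TW Ω A) (X : TW Ω A →₀ ℤ) :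
    extW f X (sg v) = X.sum fun u m => m • f u v := by
  unfold extW sg
  refine Finsupp.sum_congr fun u _ => ?_
  rw [Finsupp.sum_single_index (by simp)]
  simp only [mul_one]

lemma extW_sg_sg (f : TW Ω A → TW Ω A → (TW Ω A →₀ ℤ)) (u v : TW Ω A) :
    extW f (sg u) (sg v) = f u v := by
  rw [extW_sg_left]
  unfold sg
  rw [Finsupp.sum_single_index (by simp)]
  simp

lemma extW_mapL (f : TW Ω A → TW Ω A → (TW Ω A →₀ ℤ)) (g : TW Ω A → TW Ω A)
    (X Y : TW Ω A →₀ ℤ) :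
    extW f (Finsupp.mapDomain g X) Y = extW (fun a b => f (g a) b) X Y := by
  unfold extW
  exact Finsupp.sum_mapDomain_index (fun u => by simp)
    (fun u m₁ m₂ => by simp [add_mul, add_smul, Finsupp.sum_add])

lemma extW_mapR (f : TW Ω A → TW Ω A → (TW Ω A →₀ ℤ)) (g : TW Ω A → TW Ω A)
    (X Y : TW Ω A →₀ ℤ) :
    extW f X (Finsupp.mapDomain g Y) = extW (fun a b => f a (g b)) X Y := by
  unfold extW
  refine Finsupp.sum_congr fun u _ => ?_
  exact Finsupp.sum_mapDomain_index (by simp) (fun v n₁ n₂ => by simp [mul_add, add_smul])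

lemma mapDomain_extW (g : TW Ω A → TW Ω A) (f : TW Ω A → TW Ω A → (TW Ω A →₀ ℤ))
    (X Y : TW Ω A →₀ ℤ) :
    Finsupp.mapDomain g (extW f X Y) = extW (fun a b => Finsupp.mapDomain g (f a b)) X Y := by
  unfold extW
  rw [Finsupp.mapDomain_sum]
  refine Finsupp.sum_congr fun u _ => ?_
  rw [Finsupp.mapDomain_sum]
  refine Finsupp.sum_congr fun v _ => ?_
  exact Finsupp.mapDomain_smul _ _

lemma extW_fun_add3 (f₁ f₂ f₃ : TW Ω A → TW Ω A → (TW Ω A →₀ ℤ)) (X Y : TW Ω A →₀ ℤ) :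
    extW (fun a b => f₁ a b + f₂ a b + f₃ a b) X Y
      = extW f₁ X Y + extW f₂ X Y + extW f₃ X Y := by
  unfold extW
  simp only [smul_add, Finsupp.sum_add]

lemma consW_add (x : A) (τ : Ω) (X Y : TW Ω A →₀ ℤ) :
    consW x τ (X + Y) = consW x τ X + consW x τ Y :=
  Finsupp.mapDomain_add

lemma sg_cons (x : A) (τ : Ω) (k : A) (t : List (Ω × A)) :
    sg ((x, (τ, k) :: t) : TW Ω A) = consW x τ (sg (k, t)) := by
  unfold sg consW
  rw [Finsupp.mapDomain_single]

lemma mapDomain_consW (g : A → A) (x : A) (τ : Ω) (X : TW Ω A →₀ ℤ) :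
    Finsupp.mapDomain (fun w : TW Ω A => (g w.1, w.2)) (consW x τ X) = consW (g x) τ X := by
  unfold consW
  rw [← Finsupp.mapDomain_comp]
  rfl

lemma extW_sgl_consW (f : TW Ω A → TW Ω A → (TW Ω A →₀ ℤ)) (u : TW Ω A) (c : A) (τ : Ω)
    (h : ∀ b : TW Ω A, f u b = sg (c, (τ, b.1) :: b.2)) (Y : TW Ω A →₀ ℤ) :
    extW f (sg u) Y = consW c τ Y := by
  rw [extW_sg_left]
  unfold consW Finsupp.mapDomain
  refine Finsupp.sum_congr fun v _ => ?_
  rw [h]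
  unfold sg
  simp

lemma extW_sgr_consW (f : TW Ω A → TW Ω A → (TW Ω A →₀ ℤ)) (v : TW Ω A) (c : A) (τ : Ω)
    (h : ∀ a : TW Ω A, f a v = sg (c, (τ, a.1) :: a.2)) (X : TW Ω A →₀ ℤ) :
    extW f X (sg v) = consW c τ X := by
  rw [extW_sg_right]
  unfold consW Finsupp.mapDomain
  refine Finsupp.sum_congr fun a _ => ?_
  rw [h]
  unfold sg
  simp

lemma extW_base_left (f : TW Ω A → TW Ω A → (TW Ω A →₀ ℤ)) (u : TW Ω A)
    (g : TW Ω A → TW Ω A) (h : ∀ b, f u b = sg (g b)) (Y : TW Ω A →₀ ℤ) :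
    extW f (sg u) Y = Finsupp.mapDomain g Y := by
  rw [extW_sg_left]
  unfold Finsupp.mapDomain
  refine Finsupp.sum_congr fun v _ => ?_
  rw [h]
  unfold sg
  simp

lemma extW_push_left (f f₁ f₂ f₃ : TW Ω A → TW Ω A → (TW Ω A →₀ ℤ))
    (x x₁ x₂ x₃ : A) (τ τ₁ τ₂ τ₃ : Ω)
    (h : ∀ (a b : TW Ω A), f (x, (τ, a.1) :: a.2) b =
      consW x₁ τ₁ (f₁ a b) + consW x₂ τ₂ (f₂ a b) + consW x₃ τ₃ (f₃ a b))
    (X Y : TW Ω A →₀ ℤ) :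
    extW f (consW x τ X) Y =
      consW x₁ τ₁ (extW f₁ X Y) + consW x₂ τ₂ (extW f₂ X Y) + consW x₃ τ₃ (extW f₃ X Y) := by
  unfold consW
  rw [extW_mapL]
  have hfe : (fun (a b : TW Ω A) => f (x, (τ, a.1) :: a.2) b)
      = fun a b => Finsupp.mapDomain (fun w : TW Ω A => (x₁, (τ₁, w.1) :: w.2)) (f₁ a b)
        + Finsupp.mapDomain (fun w : TW Ω A => (x₂, (τ₂, w.1) :: w.2)) (f₂ a b)
        + Finsupp.mapDomain (fun w : TW Ω A => (x₃, (τ₃, w.1) :: w.2)) (f₃ a b) := by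
    funext a b
    simpa [consW] using h a b
  rw [hfe, extW_fun_add3,
    ← mapDomain_extW (fun w : TW Ω A => (x₁, (τ₁, w.1) :: w.2)) f₁ X Y,
    ← mapDomain_extW (fun w : TW Ω A => (x₂, (τ₂, w.1) :: w.2)) f₂ X Y,
    ← mapDomain_extW (fun w : TW Ω A => (x₃, (τ₃, w.1) :: w.2)) f₃ X Y]

lemma extW_push_right (f f₁ f₂ f₃ : TW Ω A → TW Ω A → (TW Ω A →₀ ℤ))
    (y y₁ y₂ y₃ : A) (τ τ₁ τ₂ τ₃ : Ω)
    (h : ∀ (a b : TW Ω A), f a (y, (τ, b.1) :: b.2) =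
      consW y₁ τ₁ (f₁ a b) + consW y₂ τ₂ (f₂ a b) + consW y₃ τ₃ (f₃ a b))
    (X Y : TW Ω A →₀ ℤ) :
    extW f X (consW y τ Y) =
      consW y₁ τ₁ (extW f₁ X Y) + consW y₂ τ₂ (extW f₂ X Y) + consW y₃ τ₃ (extW f₃ X Y) := by
  unfold consW
  rw [extW_mapR]
  have hfe : (fun (a b : TW Ω A) => f a (y, (τ, b.1) :: b.2))
      = fun a b => Finsupp.mapDomain (fun w : TW Ω A => (y₁, (τ₁, w.1) :: w.2)) (f₁ a b)
        + Finsupp.mapDomain (fun w : TW Ω A => (y₂, (τ₂, w.1) :: w.2)) (f₂ a b)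
        + Finsupp.mapDomain (fun w : TW Ω A => (y₃, (τ₃, w.1) :: w.2)) (f₃ a b) := by
    funext a b
    simpa [consW] using h a b
  rw [hfe, extW_fun_add3,
    ← mapDomain_extW (fun w : TW Ω A => (y₁, (τ₁, w.1) :: w.2)) f₁ X Y,
    ← mapDomain_extW (fun w : TW Ω A => (y₂, (τ₂, w.1) :: w.2)) f₂ X Y,
    ← mapDomain_extW (fun w : TW Ω A => (y₃, (τ₃, w.1) :: w.2)) f₃ X Y]

lemma extW_push_both (f f₁ f₂ f₃ : TW Ω A → TW Ω A → (TW Ω A →₀ ℤ))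
    (x y c₁ c₂ c₃ : A) (σ τ τ₁ τ₂ τ₃ : Ω)
    (h : ∀ (a b : TW Ω A), f (x, (σ, a.1) :: a.2) (y, (τ, b.1) :: b.2) =
      consW c₁ τ₁ (f₁ a b) + consW c₂ τ₂ (f₂ a b) + consW c₃ τ₃ (f₃ a b))
    (X Y : TW Ω A →₀ ℤ) :
    extW f (consW x σ X) (consW y τ Y) =
      consW c₁ τ₁ (extW f₁ X Y) + consW c₂ τ₂ (extW f₂ X Y) + consW c₃ τ₃ (extW f₃ X Y) := by
  conv_lhs => rw [consW, extW_mapL]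
  conv_lhs => rw [consW, extW_mapR]
  have hfe : (fun (a b : TW Ω A) => f (x, (σ, a.1) :: a.2) (y, (τ, b.1) :: b.2))
      = fun a b => Finsupp.mapDomain (fun w : TW Ω A => (c₁, (τ₁, w.1) :: w.2)) (f₁ a b)
        + Finsupp.mapDomain (fun w : TW Ω A => (c₂, (τ₂, w.1) :: w.2)) (f₂ a b)
        + Finsupp.mapDomain (fun w : TW Ω A => (c₃, (τ₃, w.1) :: w.2)) (f₃ a b) := by
    funext a b
    simpa [consW] using h a b
  rw [hfe, extW_fun_add3,
    ← mapDomain_extW (fun w : TW Ω A => (c₁, (τ₁, w.1) :: w.2)) f₁ X Y,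
    ← mapDomain_extW (fun w : TW Ω A => (c₂, (τ₂, w.1) :: w.2)) f₂ X Y,
    ← mapDomain_extW (fun w : TW Ω A => (c₃, (τ₃, w.1) :: w.2)) f₃ X Y]
  rfl

end Stmt13H

namespace Stmt13H

variable {Ω A : Type*}

lemma core (S : ETSops Ω) (hS : IsETS S)
    (pr su oo : Ω → TW Ω A → TW Ω A → (TW Ω A →₀ ℤ))
    (a b w : TW Ω A) (c : A) (α γ δ : Ω)
    (IH1 : ∀ α β, extW (pr β) (pr α a b) (sg w) =
        extW (pr (S.ra α β)) (sg a) (su (S.tr α β) b w)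
        + extW (pr (S.la α β)) (sg a) (pr (S.tl α β) b w)
        + extW (pr (S.dot α β)) (sg a) (oo (S.st α β) b w))
    (IH2 : ∀ α β, extW (pr β) (su α a b) (sg w) = extW (su α) (sg a) (pr β b w))
    (IH3 : ∀ α β, extW (su α) (sg a) (su β b w) =
        extW (su (S.ra α β)) (su (S.tr α β) a b) (sg w)
        + extW (su (S.la α β)) (pr (S.tl α β) a b) (sg w)
        + extW (su (S.dot α β)) (oo (S.st α β) a b) (sg w))
    (IH4 : ∀ α β, extW (oo β) (su α a b) (sg w) = extW (su α) (sg a) (oo β b w))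
    (IH5 : ∀ α β, extW (oo β) (pr α a b) (sg w) = extW (oo β) (sg a) (su α b w))
    (IH6 : ∀ α β, extW (pr β) (oo α a b) (sg w) = extW (oo α) (sg a) (pr β b w))
    (IH7 : ∀ α β, extW (oo β) (oo α a b) (sg w) = extW (oo α) (sg a) (oo β b w)) :
    (consW c (S.ra (S.ra α γ) δ) (extW (su (S.tr (S.ra α γ) δ)) (su (S.tr α γ) a b) (sg w))
      + consW c (S.la (S.ra α γ) δ) (extW (pr (S.tl (S.ra α γ) δ)) (su (S.tr α γ) a b) (sg w))
      + consW c (S.dot (S.ra α γ) δ) (extW (oo (S.st (S.ra α γ) δ)) (su (S.tr α γ) a b) (sg w)))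
    + (consW c (S.ra (S.la α γ) δ) (extW (su (S.tr (S.la α γ) δ)) (pr (S.tl α γ) a b) (sg w))
      + consW c (S.la (S.la α γ) δ) (extW (pr (S.tl (S.la α γ) δ)) (pr (S.tl α γ) a b) (sg w))
      + consW c (S.dot (S.la α γ) δ) (extW (oo (S.st (S.la α γ) δ)) (pr (S.tl α γ) a b) (sg w)))
    + (consW c (S.ra (S.dot α γ) δ) (extW (su (S.tr (S.dot α γ) δ)) (oo (S.st α γ) a b) (sg w))
      + consW c (S.la (S.dot α γ) δ) (extW (pr (S.tl (S.dot α γ) δ)) (oo (S.st α γ) a b) (sg w))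
      + consW c (S.dot (S.dot α γ) δ) (extW (oo (S.st (S.dot α γ) δ)) (oo (S.st α γ) a b) (sg w)))
    =
    (consW c (S.ra α (S.ra γ δ)) (extW (su (S.tr α (S.ra γ δ))) (sg a) (su (S.tr γ δ) b w))
      + consW c (S.la α (S.ra γ δ)) (extW (pr (S.tl α (S.ra γ δ))) (sg a) (su (S.tr γ δ) b w))
      + consW c (S.dot α (S.ra γ δ)) (extW (oo (S.st α (S.ra γ δ))) (sg a) (su (S.tr γ δ) b w)))
    + (consW c (S.ra α (S.la γ δ)) (extW (su (S.tr α (S.la γ δ))) (sg a) (pr (S.tl γ δ) b w))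
      + consW c (S.la α (S.la γ δ)) (extW (pr (S.tl α (S.la γ δ))) (sg a) (pr (S.tl γ δ) b w))
      + consW c (S.dot α (S.la γ δ)) (extW (oo (S.st α (S.la γ δ))) (sg a) (pr (S.tl γ δ) b w)))
    + (consW c (S.ra α (S.dot γ δ)) (extW (su (S.tr α (S.dot γ δ))) (sg a) (oo (S.st γ δ) b w))
      + consW c (S.la α (S.dot γ δ)) (extW (pr (S.tl α (S.dot γ δ))) (sg a) (oo (S.st γ δ) b w))
      + consW c (S.dot α (S.dot γ δ)) (extW (oo (S.st α (S.dot γ δ))) (sg a) (oo (S.st γ δ) b w)))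
    := by
  have t8' : ∀ x y z, S.ra (S.dot x y) z = S.ra x (S.ra y z) := fun x y z => (hS.t8 x y z).symm
  have d2' : ∀ x y z, S.la x (S.ra y z) = S.la x (S.la y z) := fun x y z => (hS.d2 x y z).symm
  have t6' : ∀ x y z, S.la x (S.dot y z) = S.la (S.la x y) z := fun x y z => (hS.t6 x y z).symm
  have t3' : ∀ x y z, S.tr x (S.dot y z) = S.tr x y := fun x y z => (hS.t3 x y z).symm
  have t13' : ∀ x y z, S.st x (S.la y z) = S.st x y := fun x y z => (hS.t13 x y z).symm
  have t16' : ∀ x y z, S.st x (S.dot y z) = S.st x y := fun x y z => (hS.t16 x y z).symm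
  rw [IH3 (S.tr α (S.ra γ δ)) (S.tr γ δ),
      IH2 (S.tr α γ) (S.tl (S.ra α γ) δ),
      IH4 (S.tr α γ) (S.st (S.ra α γ) δ),
      IH1 (S.tl α γ) (S.tl (S.la α γ) δ),
      IH5 (S.tl α γ) (S.st (S.la α γ) δ),
      IH6 (S.st α γ) (S.tl (S.dot α γ) δ),
      IH7 (S.st α γ) (S.st (S.dot α γ) δ)]
  simp only [consW_add]
  simp only [hS.e9, hS.e10, hS.e7, hS.e8, hS.t9, hS.t7, hS.e2, hS.e1, hS.t1, hS.t2,
    hS.e5, hS.e6, hS.e3, hS.e4, hS.t5, hS.t4, hS.d4, hS.d5, hS.d3, hS.d1,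
    hS.t11, hS.t10, hS.t15, hS.t14, hS.t18, hS.t17, t8', d2', t6', t3', t13', t16']
  rw [hS.t12 α γ δ]
  abel

end Stmt13H

/-- Theorem: for an ETS `Ω` and a matching associative algebra `A`, the typed
words with the recursively defined products `≺_ω, ≻_ω, ∘_ω` form an
`Ω`-tridendriform algebra (equations taken in the free module on typed words,
products extended bilinearly via `extW`). -/
theorem stmt13 {Ω A : Type*} (S : ETSops Ω) (hS : IsETS S)
    (star : Ω → A → A → A)
    (hstar : ∀ α β (a b c : A), star β (star α a b) c = star α a (star β b c))
    (pr su oo : Ω → TW Ω A → TW Ω A → (TW Ω A →₀ ℤ))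
    (hpr1 : ∀ ω a₁ (b : TW Ω A), pr ω (a₁, []) b = sg (a₁, (ω, b.1) :: b.2))
    (hpr2 : ∀ ω a₁ α a₂ t (b : TW Ω A), pr ω (a₁, (α, a₂) :: t) b =
      consW a₁ (S.ra α ω) (su (S.tr α ω) (a₂, t) b)
      + consW a₁ (S.la α ω) (pr (S.tl α ω) (a₂, t) b)
      + consW a₁ (S.dot α ω) (oo (S.st α ω) (a₂, t) b))
    (hsu1 : ∀ ω (a : TW Ω A) b₁, su ω a (b₁, []) = sg (b₁, (ω, a.1) :: a.2))
    (hsu2 : ∀ ω (a : TW Ω A) b₁ β b₂ t, su ω a (b₁, (β, b₂) :: t) =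
      consW b₁ (S.ra ω β) (su (S.tr ω β) a (b₂, t))
      + consW b₁ (S.la ω β) (pr (S.tl ω β) a (b₂, t))
      + consW b₁ (S.dot ω β) (oo (S.st ω β) a (b₂, t)))
    (hoo1 : ∀ ω a₁ (b : TW Ω A), oo ω (a₁, []) b = sg (star ω a₁ b.1, b.2))
    (hoo2 : ∀ ω a₁ α a₂ t b₁, oo ω (a₁, (α, a₂) :: t) ((b₁, []) : TW Ω A) =
      sg (star ω a₁ b₁, (α, a₂) :: t))
    (hoo3 : ∀ ω a₁ α a₂ ta b₁ β b₂ tb, oo ω (a₁, (α, a₂) :: ta) (b₁, (β, b₂) :: tb) =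
      consW (star ω a₁ b₁) (S.ra α β) (su (S.tr α β) (a₂, ta) (b₂, tb))
      + consW (star ω a₁ b₁) (S.la α β) (pr (S.tl α β) (a₂, ta) (b₂, tb))
      + consW (star ω a₁ b₁) (S.dot α β) (oo (S.st α β) (a₂, ta) (b₂, tb))) :
    (∀ α β (u v w : TW Ω A), extW (pr β) (pr α u v) (sg w) =
        extW (pr (S.ra α β)) (sg u) (su (S.tr α β) v w)
        + extW (pr (S.la α β)) (sg u) (pr (S.tl α β) v w)
        + extW (pr (S.dot α β)) (sg u) (oo (S.st α β) v w)) ∧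
    (∀ α β (u v w : TW Ω A), extW (pr β) (su α u v) (sg w)
        = extW (su α) (sg u) (pr β v w)) ∧
    (∀ α β (u v w : TW Ω A), extW (su α) (sg u) (su β v w) =
        extW (su (S.ra α β)) (su (S.tr α β) u v) (sg w)
        + extW (su (S.la α β)) (pr (S.tl α β) u v) (sg w)
        + extW (su (S.dot α β)) (oo (S.st α β) u v) (sg w)) ∧
    (∀ α β (u v w : TW Ω A), extW (oo β) (su α u v) (sg w)
        = extW (su α) (sg u) (oo β v w)) ∧
    (∀ α β (u v w : TW Ω A), extW (oo β) (pr α u v) (sg w)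
        = extW (oo β) (sg u) (su α v w)) ∧
    (∀ α β (u v w : TW Ω A), extW (pr β) (oo α u v) (sg w)
        = extW (oo α) (sg u) (pr β v w)) ∧
    (∀ α β (u v w : TW Ω A), extW (oo β) (oo α u v) (sg w)
        = extW (oo α) (sg u) (oo β v w)) := by
  classical
  have pushP : ∀ (ω : Ω) (x : A) (τ : Ω) (X Y : TW Ω A →₀ ℤ),
      extW (pr ω) (consW x τ X) Y =
        consW x (S.ra τ ω) (extW (su (S.tr τ ω)) X Y)
        + consW x (S.la τ ω) (extW (pr (S.tl τ ω)) X Y)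
        + consW x (S.dot τ ω) (extW (oo (S.st τ ω)) X Y) :=
    fun ω x τ X Y => Stmt13H.extW_push_left (pr ω) _ _ _ x x x x τ _ _ _
      (fun a b => hpr2 ω x τ a.1 a.2 b) X Y
  have pushS : ∀ (ω : Ω) (y : A) (τ : Ω) (X Y : TW Ω A →₀ ℤ),
      extW (su ω) X (consW y τ Y) =
        consW y (S.ra ω τ) (extW (su (S.tr ω τ)) X Y)
        + consW y (S.la ω τ) (extW (pr (S.tl ω τ)) X Y)
        + consW y (S.dot ω τ) (extW (oo (S.st ω τ)) X Y) :=
    fun ω y τ X Y => Stmt13H.extW_push_right (su ω) _ _ _ y y y y τ _ _ _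
      (fun a b => hsu2 ω a y τ b.1 b.2) X Y
  have pushO : ∀ (ω : Ω) (x : A) (σ : Ω) (y : A) (τ : Ω) (X Y : TW Ω A →₀ ℤ),
      extW (oo ω) (consW x σ X) (consW y τ Y) =
        consW (star ω x y) (S.ra σ τ) (extW (su (S.tr σ τ)) X Y)
        + consW (star ω x y) (S.la σ τ) (extW (pr (S.tl σ τ)) X Y)
        + consW (star ω x y) (S.dot σ τ) (extW (oo (S.st σ τ)) X Y) :=
    fun ω x σ y τ X Y => Stmt13H.extW_push_both (oo ω) _ _ _ x y _ _ _ σ τ _ _ _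
      (fun a b => hoo3 ω x σ a.1 a.2 y τ b.1 b.2) X Y
  have baseP : ∀ (ω : Ω) (x : A) (Y : TW Ω A →₀ ℤ),
      extW (pr ω) (sg ((x, []) : TW Ω A)) Y = consW x ω Y :=
    fun ω x Y => Stmt13H.extW_sgl_consW (pr ω) (x, []) x ω (fun b => hpr1 ω x b) Y
  have baseS : ∀ (ω : Ω) (z : A) (X : TW Ω A →₀ ℤ),
      extW (su ω) X (sg ((z, []) : TW Ω A)) = consW z ω X :=
    fun ω z X => Stmt13H.extW_sgr_consW (su ω) (z, []) z ω (fun a => hsu1 ω a z) X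
  have ooR1 : ∀ (ω : Ω) (a : TW Ω A) (z : A), oo ω a ((z, []) : TW Ω A) = sg (star ω a.1 z, a.2) := by
    intro ω a z
    obtain ⟨a₁, la⟩ := a
    cases la with
    | nil => rw [hoo1]
    | cons p t => obtain ⟨τ, k⟩ := p; rw [hoo2]
  have ooCR : ∀ (ω : Ω) (y : A) (τ : Ω) (X : TW Ω A →₀ ℤ) (z : A),
      extW (oo ω) (consW y τ X) (sg ((z, []) : TW Ω A)) = consW (star ω y z) τ X := by
    intro ω y τ X z
    rw [show consW y τ X = Finsupp.mapDomain (fun w : TW Ω A => (y, (τ, w.1) :: w.2)) X from rfl,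
      Stmt13H.extW_mapL]
    exact Stmt13H.extW_sgr_consW _ (z, []) _ τ (fun a => hoo2 ω y τ a.1 a.2 z) X
  have ooCL : ∀ (ω : Ω) (x y : A) (τ : Ω) (Y : TW Ω A →₀ ℤ),
      extW (oo ω) (sg ((x, []) : TW Ω A)) (consW y τ Y) = consW (star ω x y) τ Y := by
    intro ω x y τ Y
    rw [show consW y τ Y = Finsupp.mapDomain (fun w : TW Ω A => (y, (τ, w.1) :: w.2)) Y from rfl,
      Stmt13H.extW_mapR]
    exact Stmt13H.extW_sgl_consW _ (x, []) _ τ (fun b => hoo1 ω x (y, (τ, b.1) :: b.2)) Y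
  have baseOl : ∀ (ω : Ω) (x : A) (Y : TW Ω A →₀ ℤ),
      extW (oo ω) (sg ((x, []) : TW Ω A)) Y
        = Finsupp.mapDomain (fun b : TW Ω A => (star ω x b.1, b.2)) Y :=
    fun ω x Y => Stmt13H.extW_base_left _ _ _ (fun b => hoo1 ω x b) Y
  have prHd : ∀ (g : A → A) (ω : Ω) (a b : TW Ω A),
      pr ω (g a.1, a.2) b = Finsupp.mapDomain (fun w : TW Ω A => (g w.1, w.2)) (pr ω a b) := by
    intro g ω a b
    obtain ⟨a₁, la⟩ := a
    cases la with
    | nil => rw [hpr1, hpr1]; unfold sg; rw [Finsupp.mapDomain_single]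
    | cons p t =>
        obtain ⟨τ, k⟩ := p
        rw [hpr2, hpr2]
        simp only [Finsupp.mapDomain_add, Stmt13H.mapDomain_consW]
  have ooHdL : ∀ (ρ : Ω) (cc : A) (ω : Ω) (a b : TW Ω A),
      oo ω (star ρ cc a.1, a.2) b
        = Finsupp.mapDomain (fun w : TW Ω A => (star ρ cc w.1, w.2)) (oo ω a b) := by
    intro ρ cc ω a b
    obtain ⟨a₁, la⟩ := a
    obtain ⟨b₁, lb⟩ := b
    cases la with
    | nil => rw [hoo1, hoo1]; unfold sg; rw [Finsupp.mapDomain_single]; simp [hstar]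
    | cons p t =>
        obtain ⟨τ, k⟩ := p
        cases lb with
        | nil => rw [hoo2, hoo2]; unfold sg; rw [Finsupp.mapDomain_single]; simp [hstar]
        | cons q s =>
            obtain ⟨τ', k'⟩ := q
            rw [hoo3, hoo3]
            simp only [Finsupp.mapDomain_add, Stmt13H.mapDomain_consW, hstar]
  have ooSwap : ∀ (α β : Ω) (y : A) (a b : TW Ω A),
      oo β (star α a.1 y, a.2) b = oo α a (star β y b.1, b.2) := by
    intro α' β' y a b
    obtain ⟨a₁, la⟩ := a
    obtain ⟨b₁, lb⟩ := b
    cases la with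
    | nil => rw [hoo1, hoo1]; simp [hstar]
    | cons p t =>
        obtain ⟨τ, k⟩ := p
        cases lb with
        | nil => rw [hoo2, hoo2]; simp [hstar]
        | cons q s =>
            obtain ⟨τ', k'⟩ := q
            rw [hoo3, hoo3]
            simp [hstar]
  have main : ∀ n : ℕ, ∀ u v w : TW Ω A, u.2.length + v.2.length + w.2.length < n →
      ((∀ α β, extW (pr β) (pr α u v) (sg w) =
          extW (pr (S.ra α β)) (sg u) (su (S.tr α β) v w)
          + extW (pr (S.la α β)) (sg u) (pr (S.tl α β) v w)
          + extW (pr (S.dot α β)) (sg u) (oo (S.st α β) v w)) ∧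
      (∀ α β, extW (pr β) (su α u v) (sg w) = extW (su α) (sg u) (pr β v w)) ∧
      (∀ α β, extW (su α) (sg u) (su β v w) =
          extW (su (S.ra α β)) (su (S.tr α β) u v) (sg w)
          + extW (su (S.la α β)) (pr (S.tl α β) u v) (sg w)
          + extW (su (S.dot α β)) (oo (S.st α β) u v) (sg w)) ∧
      (∀ α β, extW (oo β) (su α u v) (sg w) = extW (su α) (sg u) (oo β v w)) ∧
      (∀ α β, extW (oo β) (pr α u v) (sg w) = extW (oo β) (sg u) (su α v w)) ∧
      (∀ α β, extW (pr β) (oo α u v) (sg w) = extW (oo α) (sg u) (pr β v w)) ∧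
      (∀ α β, extW (oo β) (oo α u v) (sg w) = extW (oo α) (sg u) (oo β v w))) := by
    intro n
    induction n with
    | zero => intro u v w h; exact absurd h (by omega)
    | succ n ih =>
      intro u v w hlen
      refine ⟨?_, ?_, ?_, ?_, ?_, ?_, ?_⟩
      · -- ax1 : case on u
        intro α β
        obtain ⟨x, lu⟩ := u
        cases lu with
        | nil =>
            simp only [hpr1, Stmt13H.sg_cons, Prod.mk.eta, pushP, baseP, Stmt13H.extW_sg_sg]
        | cons p tu =>
            obtain ⟨ν, x2⟩ := p
            obtain ⟨J1, J2, J3, J4, J5, J6, J7⟩ := ih (x2, tu) v w (by simp at hlen ⊢; omega)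
            simp only [hpr2, Stmt13H.extW_add_left, pushP, Stmt13H.sg_cons]
            exact Stmt13H.core S hS pr su oo (x2, tu) v w x ν α β J1 J2 J3 J4 J5 J6 J7
      · -- ax2 : case on v
        intro α β
        obtain ⟨y, lv⟩ := v
        cases lv with
        | nil =>
            simp only [hsu1, hpr1, Stmt13H.sg_cons, Prod.mk.eta, pushP, pushS,
              Stmt13H.extW_sg_sg]
        | cons p tv =>
            obtain ⟨γ2, v2⟩ := p
            obtain ⟨J1, J2, J3, J4, J5, J6, J7⟩ := ih u (v2, tv) w (by simp at hlen ⊢; omega)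
            simp only [hsu2, hpr2, Stmt13H.extW_add_left, Stmt13H.extW_add_right, pushP, pushS]
            exact Stmt13H.core S hS pr su oo u (v2, tv) w y α γ2 β J1 J2 J3 J4 J5 J6 J7
      · -- ax3 : case on w
        intro α β
        obtain ⟨z, lw⟩ := w
        cases lw with
        | nil =>
            simp only [hsu1, Stmt13H.sg_cons, Prod.mk.eta, pushS, baseS, Stmt13H.extW_sg_sg]
        | cons p tw =>
            obtain ⟨δ2, w2⟩ := p
            obtain ⟨J1, J2, J3, J4, J5, J6, J7⟩ := ih u v (w2, tw) (by simp at hlen ⊢; omega)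
            simp only [hsu2, Stmt13H.extW_add_right, Stmt13H.extW_add_left, pushS,
              Stmt13H.sg_cons]
            exact (Stmt13H.core S hS pr su oo u v (w2, tw) z α β δ2 J1 J2 J3 J4 J5 J6 J7).symm
      · -- ax4 : case on v and w
        intro α β
        obtain ⟨y, lv⟩ := v
        obtain ⟨z, lw⟩ := w
        cases lv with
        | nil =>
            cases lw with
            | nil =>
                simp only [hsu1, hsu2, hoo1, hoo2, ooR1, Stmt13H.sg_cons, Prod.mk.eta,
                  Stmt13H.extW_add_left, Stmt13H.extW_add_right, pushP, pushS, pushO,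
                  ooCR, ooCL, Stmt13H.extW_sg_sg, hstar]
            | cons r tw =>
                obtain ⟨δ2, w2⟩ := r
                simp only [hsu1, hsu2, hoo1, hoo2, hoo3, ooR1, Stmt13H.sg_cons, Prod.mk.eta,
                  Stmt13H.extW_add_left, Stmt13H.extW_add_right, pushP, pushS, pushO,
                  ooCR, ooCL, Stmt13H.extW_sg_sg, hstar]
        | cons q tv =>
            obtain ⟨γ2, v2⟩ := q
            cases lw with
            | nil =>
                simp only [hsu1, hsu2, hoo1, hoo2, hoo3, ooR1, Stmt13H.sg_cons, Prod.mk.eta,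
                  Stmt13H.extW_add_left, Stmt13H.extW_add_right, pushP, pushS, pushO,
                  ooCR, ooCL, Stmt13H.extW_sg_sg, hstar]
            | cons r tw =>
                obtain ⟨δ2, w2⟩ := r
                obtain ⟨J1, J2, J3, J4, J5, J6, J7⟩ := ih u (v2, tv) (w2, tw)
                  (by simp at hlen ⊢; omega)
                simp only [hsu2, hoo3, Stmt13H.extW_add_left, Stmt13H.extW_add_right,
                  pushS, pushO, Stmt13H.sg_cons]
                exact Stmt13H.core S hS pr su oo u (v2, tv) (w2, tw) (star β y z) α γ2 δ2
                  J1 J2 J3 J4 J5 J6 J7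
      · -- ax5 : case on u and w
        intro α β
        obtain ⟨x, lu⟩ := u
        obtain ⟨z, lw⟩ := w
        cases lu with
        | nil =>
            cases lw with
            | nil =>
                simp only [hpr1, hsu1, hoo1, hoo2, ooR1, Stmt13H.sg_cons, Prod.mk.eta,
                  Stmt13H.extW_add_left, Stmt13H.extW_add_right, pushP, pushS, pushO,
                  ooCR, ooCL, Stmt13H.extW_sg_sg, hstar]
            | cons r tw =>
                obtain ⟨δ2, w2⟩ := r
                simp only [hpr1, hsu2, hoo1, hoo3, Stmt13H.sg_cons, Prod.mk.eta,
                  Stmt13H.extW_add_left, Stmt13H.extW_add_right, pushP, pushS, pushO,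
                  ooCR, ooCL, Stmt13H.extW_sg_sg, hstar]
        | cons p tu =>
            obtain ⟨ν, x2⟩ := p
            cases lw with
            | nil =>
                simp only [hpr2, hsu1, hoo2, ooR1, Stmt13H.sg_cons, Prod.mk.eta,
                  Stmt13H.extW_add_left, Stmt13H.extW_add_right, pushP, pushS, pushO,
                  ooCR, ooCL, Stmt13H.extW_sg_sg, hstar]
            | cons r tw =>
                obtain ⟨δ2, w2⟩ := r
                obtain ⟨J1, J2, J3, J4, J5, J6, J7⟩ := ih (x2, tu) v (w2, tw)
                  (by simp at hlen ⊢; omega)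
                simp only [hpr2, hsu2, Stmt13H.extW_add_left, Stmt13H.extW_add_right,
                  pushP, pushS, pushO, Stmt13H.sg_cons]
                exact Stmt13H.core S hS pr su oo (x2, tu) v (w2, tw) (star β x z) ν α δ2
                  J1 J2 J3 J4 J5 J6 J7
      · -- ax6 : case on u and v
        intro α β
        obtain ⟨x, lu⟩ := u
        cases lu with
        | nil =>
            rw [hoo1, Stmt13H.extW_sg_sg, baseOl]
            exact prHd (star α x) β v w
        | cons p tu =>
            obtain ⟨ν, x2⟩ := p
            obtain ⟨y, lv⟩ := v
            cases lv with
            | nil =>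
                simp only [hoo2, hpr1, Stmt13H.sg_cons, Prod.mk.eta,
                  Stmt13H.extW_add_left, Stmt13H.extW_add_right, pushP, pushS, pushO,
                  Stmt13H.extW_sg_sg, hstar]
            | cons q tv =>
                obtain ⟨γ2, v2⟩ := q
                obtain ⟨J1, J2, J3, J4, J5, J6, J7⟩ := ih (x2, tu) (v2, tv) w
                  (by simp at hlen ⊢; omega)
                simp only [hoo3, hpr2, Stmt13H.extW_add_left, Stmt13H.extW_add_right,
                  pushP, pushO, Stmt13H.sg_cons]
                exact Stmt13H.core S hS pr su oo (x2, tu) (v2, tv) w (star α x y) ν γ2 β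
                  J1 J2 J3 J4 J5 J6 J7
      · -- ax7 : case on u, v, w
        intro α β
        obtain ⟨x, lu⟩ := u
        cases lu with
        | nil =>
            rw [hoo1, Stmt13H.extW_sg_sg, baseOl]
            exact ooHdL α x β v w
        | cons p tu =>
            obtain ⟨ν, x2⟩ := p
            obtain ⟨y, lv⟩ := v
            cases lv with
            | nil =>
                rw [ooR1 α (x, (ν, x2) :: tu) y, Stmt13H.extW_sg_sg, hoo1 β y w,
                  Stmt13H.extW_sg_sg]
                exact ooSwap α β y (x, (ν, x2) :: tu) w
            | cons q tv =>
                obtain ⟨γ2, v2⟩ := q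
                obtain ⟨z, lw⟩ := w
                cases lw with
                | nil =>
                    simp only [hoo2, hoo3, ooR1, Stmt13H.sg_cons, Prod.mk.eta,
                      Stmt13H.extW_add_left, Stmt13H.extW_add_right, pushO, ooCR, ooCL,
                      Stmt13H.extW_sg_sg, hstar]
                | cons r tw =>
                    obtain ⟨δ2, w2⟩ := r
                    obtain ⟨J1, J2, J3, J4, J5, J6, J7⟩ := ih (x2, tu) (v2, tv) (w2, tw)
                      (by simp at hlen ⊢; omega)
                    simp only [hoo3, Stmt13H.extW_add_left, Stmt13H.extW_add_right,
                      pushO, Stmt13H.sg_cons, hstar]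
                    exact Stmt13H.core S hS pr su oo (x2, tu) (v2, tv) (w2, tw)
                      (star α x (star β y z)) ν γ2 δ2 J1 J2 J3 J4 J5 J6 J7
  refine ⟨fun α β u v w => ?_, fun α β u v w => ?_, fun α β u v w => ?_, fun α β u v w => ?_,
    fun α β u v w => ?_, fun α β u v w => ?_, fun α β u v w => ?_⟩
  · exact (main (u.2.length + v.2.length + w.2.length + 1) u v w (by omega)).1 α β
  · exact (main (u.2.length + v.2.length + w.2.length + 1) u v w (by omega)).2.1 α β
  · exact (main (u.2.length + v.2.length + w.2.length + 1) u v w (by omega)).2.2.1 α β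
  · exact (main (u.2.length + v.2.length + w.2.length + 1) u v w (by omega)).2.2.2.1 α β
  · exact (main (u.2.length + v.2.length + w.2.length + 1) u v w (by omega)).2.2.2.2.1 α β
  · exact (main (u.2.length + v.2.length + w.2.length + 1) u v w (by omega)).2.2.2.2.2.1 α β
  · exact (main (u.2.length + v.2.length + w.2.length + 1) u v w (by omega)).2.2.2.2.2.2 α β
end

section
/- Let Ω be a commutative extended triassociative semigroup (i.e. equal to its opposite: α←β = β→α, α⊲β = β⊳α, α*β = β*α, α·β = β·α for all α, β) and let (A, (⋆_ω)) be a commutative matching associative algebra (a ⋆_ω b = b ⋆_ω a for all a,b,ω). Then in the Ω-tridendriform algebra sh⁺(A) of Ω-typed words, one has a ≺_α b = b ≻_α a and a ∘_α b = b ∘_α a for all typed words a, b and all α ∈ Ω. -/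
/-- For a commutative ETS and a commutative matching associative algebra,
the typed-word products satisfy `a ≺_α b = b ≻_α a` and `a ∘_α b = b ∘_α a`. -/
theorem stmt14 {Ω A : Type*} (S : ETSops Ω) (hS : IsETS S)
    (hcla : ∀ α β, S.la α β = S.ra β α)
    (hctl : ∀ α β, S.tl α β = S.tr β α)
    (hcst : ∀ α β, S.st α β = S.st β α)
    (hcdot : ∀ α β, S.dot α β = S.dot β α)
    (star : Ω → A → A → A)
    (hstar : ∀ α β (a b c : A), star β (star α a b) c = star α a (star β b c))
    (pr su oo : Ω → TW Ω A → TW Ω A → (TW Ω A →₀ ℤ))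
    (hpr1 : ∀ ω a₁ (b : TW Ω A), pr ω (a₁, []) b = sg (a₁, (ω, b.1) :: b.2))
    (hpr2 : ∀ ω a₁ α a₂ t (b : TW Ω A), pr ω (a₁, (α, a₂) :: t) b =
      consW a₁ (S.ra α ω) (su (S.tr α ω) (a₂, t) b)
      + consW a₁ (S.la α ω) (pr (S.tl α ω) (a₂, t) b)
      + consW a₁ (S.dot α ω) (oo (S.st α ω) (a₂, t) b))
    (hsu1 : ∀ ω (a : TW Ω A) b₁, su ω a (b₁, []) = sg (b₁, (ω, a.1) :: a.2))
    (hsu2 : ∀ ω (a : TW Ω A) b₁ β b₂ t, su ω a (b₁, (β, b₂) :: t) =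
      consW b₁ (S.ra ω β) (su (S.tr ω β) a (b₂, t))
      + consW b₁ (S.la ω β) (pr (S.tl ω β) a (b₂, t))
      + consW b₁ (S.dot ω β) (oo (S.st ω β) a (b₂, t)))
    (hoo1 : ∀ ω a₁ (b : TW Ω A), oo ω (a₁, []) b = sg (star ω a₁ b.1, b.2))
    (hoo2 : ∀ ω a₁ α a₂ t b₁, oo ω (a₁, (α, a₂) :: t) ((b₁, []) : TW Ω A) =
      sg (star ω a₁ b₁, (α, a₂) :: t))
    (hoo3 : ∀ ω a₁ α a₂ ta b₁ β b₂ tb, oo ω (a₁, (α, a₂) :: ta) (b₁, (β, b₂) :: tb) =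
      consW (star ω a₁ b₁) (S.ra α β) (su (S.tr α β) (a₂, ta) (b₂, tb))
      + consW (star ω a₁ b₁) (S.la α β) (pr (S.tl α β) (a₂, ta) (b₂, tb))
      + consW (star ω a₁ b₁) (S.dot α β) (oo (S.st α β) (a₂, ta) (b₂, tb)))
    (hstarcomm : ∀ ω (a b : A), star ω a b = star ω b a) :
    ∀ α (u v : TW Ω A), pr α u v = su α v u ∧ oo α u v = oo α v u := by
  
  suffices h : ∀ n α (u v : TW Ω A), u.2.length + v.2.length ≤ n →
      pr α u v = su α v u ∧ oo α u v = oo α v u by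
    intro α u v
    exact h (u.2.length + v.2.length) α u v le_rfl
  intro n
  induction n with
  | zero =>
    intro α u v hlen
    obtain ⟨a₁, ta⟩ := u
    obtain ⟨b₁, tb⟩ := v
    simp only [List.length_eq_zero_iff] at hlen
    have hta : ta = [] := by cases ta with
      | nil => rfl
      | cons x t => simp at hlen
    have htb : tb = [] := by cases tb with
      | nil => rfl
      | cons x t => simp at hlen
    subst hta; subst htb
    refine ⟨?_, ?_⟩
    · rw [hpr1, hsu1]
    · rw [hoo1, hoo1, hstarcomm]
  | succ n ih =>
    intro α u v hlen
    obtain ⟨a₁, ta⟩ := u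
    obtain ⟨b₁, tb⟩ := v
    refine ⟨?_, ?_⟩
    · cases ta with
      | nil => rw [hpr1, hsu1]
      | cons x t =>
        obtain ⟨γ, a₂⟩ := x
        have hl : (a₂, t).2.length + (b₁, tb).2.length ≤ n := by
          simp only [List.length_cons] at hlen ⊢; omega
        have hl' : (b₁, tb).2.length + (a₂, t).2.length ≤ n := by
          simp only [List.length_cons] at hlen ⊢; omega
        rw [hpr2, hsu2,
          ← (ih (S.tr γ α) (b₁, tb) (a₂, t) hl').1,
          ← (ih (S.tr α γ) (a₂, t) (b₁, tb) hl).1,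
          hcla α γ, hcla γ α, hctl α γ, hctl γ α, hcdot γ α, hcst γ α,
          (ih (S.st α γ) (a₂, t) (b₁, tb) hl).2]
        abel
    · cases ta with
      | nil =>
        cases tb with
        | nil => rw [hoo1, hoo1, hstarcomm]
        | cons y s =>
          obtain ⟨δ, b₂⟩ := y
          rw [hoo1, hoo2, hstarcomm]
      | cons x t =>
        obtain ⟨γ, a₂⟩ := x
        cases tb with
        | nil => rw [hoo1, hoo2, hstarcomm]
        | cons y s =>
          obtain ⟨δ, b₂⟩ := y
          have hl : (a₂, t).2.length + (b₂, s).2.length ≤ n := by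
            simp only [List.length_cons] at hlen ⊢; omega
          have hl' : (b₂, s).2.length + (a₂, t).2.length ≤ n := by
            simp only [List.length_cons] at hlen ⊢; omega
          rw [hoo3, hoo3, hstarcomm α b₁ a₁,
            ← (ih (S.tr γ δ) (b₂, s) (a₂, t) hl').1,
            ← (ih (S.tr δ γ) (a₂, t) (b₂, s) hl).1,
            hcla δ γ, hcla γ δ, hctl δ γ, hctl γ δ, hcdot γ δ, hcst γ δ,
            (ih (S.st δ γ) (a₂, t) (b₂, s) hl).2]
          abel
end
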